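/- arXiv:1702.08437 — 5 statements merged into one kernel-verified Lean document; each statement's English description precedes it below -/
import Mathlib

section
/- Let t₁ ≠ t₂ be real numbers, let g : ℝ → ℝ be differentiable, and let ẏ₁, ẏ₂ be real numbers. Define y(t) = g(t) + (t(2t₂ − t))/(2(t₂ − t₁)) · (ẏ₁ − g'(t₁)) + (t(t − 2t₁))/(2(t₂ − t₁)) · (ẏ₂ − g'(t₂)). Then y is differentiable and its derivative satisfies the two constraints y'(t₁) = ẏ₁ and y'(t₂) = ẏ₂. -/
/-! The two quadratic correction terms have derivatives `(t₂ - t) / (t₂ - t₁)` and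
`(t - t₁) / (t₂ - t₁)`, the linear Lagrange basis on the nodes `t₁, t₂`. Hence at each node
exactly one of them has slope one, and it adds precisely the missing slope `ẏᵢ - g'(tᵢ)`. -/

theorem hasDerivAt_mul_two_sub_div (a d t : ℝ) :
    HasDerivAt (fun t => t * (2 * a - t) / (2 * d)) ((a - t) / d) t :=
  (((hasDerivAt_id t).mul ((hasDerivAt_const t (2 * a)).sub (hasDerivAt_id t))).div_const
    (2 * d)).congr_deriv (by simp only [Pi.sub_apply, id]; ring)

theorem hasDerivAt_mul_sub_two_div (a d t : ℝ) :
    HasDerivAt (fun t => t * (t - 2 * a) / (2 * d)) ((t - a) / d) t :=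
  (((hasDerivAt_id t).mul ((hasDerivAt_id t).sub (hasDerivAt_const t (2 * a)))).div_const
    (2 * d)).congr_deriv (by simp only [Pi.sub_apply, id]; ring)

theorem hasDerivAt_add_slope_corrections {g : ℝ → ℝ} {g' : ℝ} (t₁ t₂ c₁ c₂ t : ℝ)
    (hg : HasDerivAt g g' t) :
    HasDerivAt (fun t => g t + t * (2 * t₂ - t) / (2 * (t₂ - t₁)) * c₁
        + t * (t - 2 * t₁) / (2 * (t₂ - t₁)) * c₂)
      (g' + (t₂ - t) / (t₂ - t₁) * c₁ + (t - t₁) / (t₂ - t₁) * c₂) t :=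
  (hg.add ((hasDerivAt_mul_two_sub_div t₂ (t₂ - t₁) t).mul_const c₁)).add
    ((hasDerivAt_mul_sub_two_div t₁ (t₂ - t₁) t).mul_const c₂)

theorem stmt_0 (t₁ t₂ : ℝ) (ht : t₁ ≠ t₂) (g : ℝ → ℝ) (hg : Differentiable ℝ g)
    (ydot₁ ydot₂ : ℝ) (y : ℝ → ℝ)
    (hy : ∀ t, y t = g t + (t * (2 * t₂ - t)) / (2 * (t₂ - t₁)) * (ydot₁ - deriv g t₁)
        + (t * (t - 2 * t₁)) / (2 * (t₂ - t₁)) * (ydot₂ - deriv g t₂)) :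
    Differentiable ℝ y ∧ deriv y t₁ = ydot₁ ∧ deriv y t₂ = ydot₂ := by
  have hy' : ∀ t, HasDerivAt y (deriv g t + (t₂ - t) / (t₂ - t₁) * (ydot₁ - deriv g t₁)
      + (t - t₁) / (t₂ - t₁) * (ydot₂ - deriv g t₂)) t := fun t => by
    rw [funext hy]
    exact hasDerivAt_add_slope_corrections t₁ t₂ _ _ t (hg t).hasDerivAt
  have hne : t₂ - t₁ ≠ 0 := sub_ne_zero.2 ht.symm
  refine ⟨fun t => (hy' t).differentiableAt, ?_, ?_⟩
  · rw [(hy' t₁).deriv, div_self hne, sub_self, zero_div]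
    ring
  · rw [(hy' t₂).deriv, div_self hne, sub_self, zero_div]
    ring
end

section
/- Let g : ℝ → ℝ be twice differentiable and let ÿ₁, y₂, y₃, ẏ₄ be real numbers. Define y(t) = g(t) + t(−4 + 4t − t²)/14 · (g''(−1) subtracted from ÿ₁, i.e. (ÿ₁ − g''(−1))) + (28 − 24t + 3t² + t³)/28 · (y₂ − g(0)) + t(24 − 3t − t²)/28 · (y₃ − g(2)) + (−10t + 3t² + t³)/14 · (ẏ₄ − g'(2)). Then y satisfies all four constraints: y''(−1) = ÿ₁, y(0) = y₂, y(2) = y₃, and y'(2) = ẏ₄. -/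
/-! Subtracting `g` from `y` leaves a cubic polynomial whose four coefficients are linear in the
residuals `ÿ₁ - g''(-1)`, `y₂ - g(0)`, `y₃ - g(2)`, `ẏ₄ - g'(2)`. The four switching polynomials
are chosen so that each one satisfies exactly one of the homogeneous constraints with value `1`
and the other three with value `0`; hence the constraints on `y` reduce to polynomial identities
between the coefficients. -/

section CubicPerturbation

variable {g : ℝ → ℝ} (a b c d : ℝ)

theorem hasDerivAt_quadratic (t : ℝ) :
    HasDerivAt (fun t : ℝ => a + b * t + c * t ^ 2) (b + 2 * c * t) t :=
  (((hasDerivAt_const t a).add ((hasDerivAt_id t).const_mul b)).add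
    ((hasDerivAt_pow 2 t).const_mul c)).congr_deriv (by push_cast; ring)

theorem hasDerivAt_cubic (t : ℝ) :
    HasDerivAt (fun t : ℝ => a + b * t + c * t ^ 2 + d * t ^ 3)
      (b + 2 * c * t + 3 * d * t ^ 2) t :=
  ((hasDerivAt_quadratic a b c t).add ((hasDerivAt_pow 3 t).const_mul d)).congr_deriv
    (by push_cast; ring)

theorem deriv_add_cubic (hg : Differentiable ℝ g) :
    deriv (fun t => g t + (a + b * t + c * t ^ 2 + d * t ^ 3)) =
      fun t => deriv g t + (b + 2 * c * t + 3 * d * t ^ 2) :=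
  funext fun t => ((hg t).hasDerivAt.add (hasDerivAt_cubic a b c d t)).deriv

theorem deriv_deriv_add_cubic (hg : Differentiable ℝ g) (hg' : Differentiable ℝ (deriv g))
    (t : ℝ) :
    deriv (deriv (fun t => g t + (a + b * t + c * t ^ 2 + d * t ^ 3))) t =
      deriv (deriv g) t + (2 * c + 6 * d * t) := by
  rw [deriv_add_cubic a b c d hg]
  exact ((hg' t).hasDerivAt.add (hasDerivAt_quadratic b (2 * c) (3 * d) t)).deriv.trans
    (by ring)

end CubicPerturbation

theorem stmt_1 (g : ℝ → ℝ) (hg : Differentiable ℝ g) (hg' : Differentiable ℝ (deriv g))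
    (yddot₁ y₂ y₃ ydot₄ : ℝ) (y : ℝ → ℝ)
    (hy : ∀ t, y t = g t
        + t * (-4 + 4 * t - t ^ 2) / 14 * (yddot₁ - deriv (deriv g) (-1))
        + (28 - 24 * t + 3 * t ^ 2 + t ^ 3) / 28 * (y₂ - g 0)
        + t * (24 - 3 * t - t ^ 2) / 28 * (y₃ - g 2)
        + (-10 * t + 3 * t ^ 2 + t ^ 3) / 14 * (ydot₄ - deriv g 2)) :
    deriv (deriv y) (-1) = yddot₁ ∧ y 0 = y₂ ∧ y 2 = y₃ ∧ deriv y 2 = ydot₄ := by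
  set A := yddot₁ - deriv (deriv g) (-1)
  set B := y₂ - g 0
  set C := y₃ - g 2
  set D := ydot₄ - deriv g 2
  have hy_cubic : y = fun t => g t + (B + (-2 / 7 * A - 6 / 7 * B + 6 / 7 * C - 5 / 7 * D) * t
      + (2 / 7 * A + 3 / 28 * B - 3 / 28 * C + 3 / 14 * D) * t ^ 2
      + (-1 / 14 * A + 1 / 28 * B - 1 / 28 * C + 1 / 14 * D) * t ^ 3) := by
    funext t
    rw [hy t]
    ring
  refine ⟨?_, ?_, ?_, ?_⟩
  · rw [hy_cubic, deriv_deriv_add_cubic _ _ _ _ hg hg']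
    ring
  · rw [hy_cubic]
    ring
  · rw [hy_cubic]
    ring
  · rw [hy_cubic, deriv_add_cubic _ _ _ _ hg]
    ring
end

section
/- Let g : ℝ → ℝ be twice differentiable and let ẏ₁ₓ, ÿ₂ₓ be real numbers. Define y(x) = g(x) + x(ẏ₁ₓ − g'(−1)) + x(x/2 + 1)(ÿ₂ₓ − g''(1)). Then y'(−1) = ẏ₁ₓ and y''(1) = ÿ₂ₓ. -/
/-! The correction term `x a + x (x/2 + 1) b` has derivative `a + (x + 1) b`, which equals `a` at
`x = -1`, and constant second derivative `b`. With `a = ẏ₁ₓ - g'(-1)` and `b = ÿ₂ₓ - g''(1)`, adding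
it to `g` therefore moves `y'(-1)` and `y''(1)` exactly onto the prescribed values. -/

theorem hasDerivAt_correction (a b x : ℝ) :
    HasDerivAt (fun x : ℝ => x * a + x * (x / 2 + 1) * b) (a + (x + 1) * b) x := by
  have h : HasDerivAt (fun x : ℝ => x * a + x * (x / 2 + 1) * b)
      (1 * a + (1 * (x / 2 + 1) + x * (1 / 2)) * b) x :=
    ((hasDerivAt_id x).mul_const a).add
      (((hasDerivAt_id x).mul (((hasDerivAt_id x).div_const 2).add_const 1)).mul_const b)
  convert h using 1
  ring

theorem hasDerivAt_correction_deriv (a b x : ℝ) :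
    HasDerivAt (fun x : ℝ => a + (x + 1) * b) b x := by
  simpa using (((hasDerivAt_id x).add_const 1).mul_const b).const_add a

theorem deriv_deriv_add_of_hasDerivAt {𝕜 F : Type*} [NontriviallyNormedField 𝕜]
    [NormedAddCommGroup F] [NormedSpace 𝕜 F] {g q q' : 𝕜 → F} {c : F} {x : 𝕜}
    (hg : Differentiable 𝕜 g) (hg' : DifferentiableAt 𝕜 (deriv g) x) (hq : ∀ t, HasDerivAt q (q' t) t)
    (hq' : HasDerivAt q' c x) :
    deriv (deriv (g + q)) x = deriv (deriv g) x + c := by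
  have hderiv : deriv (g + q) = deriv g + q' :=
    funext fun t => ((hg t).hasDerivAt.add (hq t)).deriv
  rw [hderiv]
  exact (hg'.hasDerivAt.add hq').deriv

theorem stmt_10 (g : ℝ → ℝ) (hg : Differentiable ℝ g) (hg' : Differentiable ℝ (deriv g))
    (ydot₁ₓ yddot₂ₓ : ℝ) (y : ℝ → ℝ)
    (hy : ∀ x, y x = g x + x * (ydot₁ₓ - deriv g (-1))
        + x * (x / 2 + 1) * (yddot₂ₓ - deriv (deriv g) 1)) :
    deriv y (-1) = ydot₁ₓ ∧ deriv (deriv y) 1 = yddot₂ₓ := by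
  set a := ydot₁ₓ - deriv g (-1)
  set b := yddot₂ₓ - deriv (deriv g) 1
  have hy_eq : y = g + fun x => x * a + x * (x / 2 + 1) * b :=
    funext fun x => by simp only [hy, Pi.add_apply, add_assoc]
  subst hy_eq
  constructor
  · rw [((hg (-1)).hasDerivAt.add (hasDerivAt_correction a b (-1))).deriv]
    ring
  · rw [deriv_deriv_add_of_hasDerivAt hg (hg' 1) (hasDerivAt_correction a b)
      (hasDerivAt_correction_deriv a b 1)]
    ring
end

section
/- Let g : ℝ → ℝ be twice differentiable and let ÿ₁ₓ, ÿ₂ₓ be real numbers. Define y(x) = g(x) + (x²/12)(3 − x)(ÿ₁ₓ − g''(−1)) + (x²/12)(3 + x)(ÿ₂ₓ − g''(1)). Then y''(−1) = ÿ₁ₓ and y''(1) = ÿ₂ₓ. -/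
/-! The correction term is a cubic whose second derivative is the linear interpolation
`((1 - x) a + (1 + x) b) / 2`, equal to `a` at `-1` and `b` at `1`; since second derivatives
add, `y'' (-1) = g'' (-1) + (ÿ₁ₓ - g'' (-1))`, and similarly at `1`. -/

theorem deriv_deriv_add {f h : ℝ → ℝ} (hf : Differentiable ℝ f) (hf' : Differentiable ℝ (deriv f))
    (hh : Differentiable ℝ h) (hh' : Differentiable ℝ (deriv h)) (x : ℝ) :
    deriv (deriv (f + h)) x = deriv (deriv f) x + deriv (deriv h) x := by
  have : deriv (f + h) = deriv f + deriv h := funext fun y => deriv_add (hf y) (hh y)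
  rw [this, deriv_add (hf' x) (hh' x)]

noncomputable def endpointCorrection (a b : ℝ) (x : ℝ) : ℝ :=
  x ^ 2 / 12 * (3 - x) * a + x ^ 2 / 12 * (3 + x) * b

theorem hasDerivAt_endpointCorrection (a b x : ℝ) :
    HasDerivAt (endpointCorrection a b) (((2 * x - x ^ 2) * a + (2 * x + x ^ 2) * b) / 4) x := by
  have h := ((((hasDerivAt_pow 2 x).div_const 12).mul
      ((hasDerivAt_const x 3).sub (hasDerivAt_id x))).mul_const a).add
    ((((hasDerivAt_pow 2 x).div_const 12).mul
      ((hasDerivAt_const x 3).add (hasDerivAt_id x))).mul_const b)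
  refine h.congr_deriv ?_
  simp only [id_eq, Pi.sub_apply, Pi.add_apply]
  push_cast
  ring

theorem deriv_endpointCorrection (a b : ℝ) :
    deriv (endpointCorrection a b) = fun x => ((2 * x - x ^ 2) * a + (2 * x + x ^ 2) * b) / 4 :=
  funext fun x => (hasDerivAt_endpointCorrection a b x).deriv

theorem hasDerivAt_deriv_endpointCorrection (a b x : ℝ) :
    HasDerivAt (deriv (endpointCorrection a b)) (((1 - x) * a + (1 + x) * b) / 2) x := by
  rw [deriv_endpointCorrection]
  have h := (((((hasDerivAt_id x).const_mul 2).sub (hasDerivAt_pow 2 x)).mul_const a).add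
    ((((hasDerivAt_id x).const_mul 2).add (hasDerivAt_pow 2 x)).mul_const b)).div_const 4
  refine h.congr_deriv ?_
  push_cast
  ring

theorem differentiable_endpointCorrection (a b : ℝ) : Differentiable ℝ (endpointCorrection a b) :=
  fun x => (hasDerivAt_endpointCorrection a b x).differentiableAt

theorem differentiable_deriv_endpointCorrection (a b : ℝ) :
    Differentiable ℝ (deriv (endpointCorrection a b)) :=
  fun x => (hasDerivAt_deriv_endpointCorrection a b x).differentiableAt

theorem deriv_deriv_endpointCorrection (a b x : ℝ) :
    deriv (deriv (endpointCorrection a b)) x = ((1 - x) * a + (1 + x) * b) / 2 :=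
  (hasDerivAt_deriv_endpointCorrection a b x).deriv

theorem stmt_11 (g : ℝ → ℝ) (hg : Differentiable ℝ g) (hg' : Differentiable ℝ (deriv g))
    (yddot₁ₓ yddot₂ₓ : ℝ) (y : ℝ → ℝ)
    (hy : ∀ x, y x = g x + x ^ 2 / 12 * (3 - x) * (yddot₁ₓ - deriv (deriv g) (-1))
        + x ^ 2 / 12 * (3 + x) * (yddot₂ₓ - deriv (deriv g) 1)) :
    deriv (deriv y) (-1) = yddot₁ₓ ∧ deriv (deriv y) 1 = yddot₂ₓ := by
  set c := endpointCorrection (yddot₁ₓ - deriv (deriv g) (-1)) (yddot₂ₓ - deriv (deriv g) 1)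
  have hyc : y = g + c := funext fun x => by
    simp only [hy, Pi.add_apply, c, endpointCorrection]; ring
  have hy'' (x : ℝ) : deriv (deriv y) x = deriv (deriv g) x + deriv (deriv c) x := by
    rw [hyc]
    exact deriv_deriv_add hg hg' (differentiable_endpointCorrection _ _)
      (differentiable_deriv_endpointCorrection _ _) x
  constructor
  · rw [hy'', deriv_deriv_endpointCorrection]; ring
  · rw [hy'', deriv_deriv_endpointCorrection]; ring
end

section
/- Let g : ℝ → ℝ be twice differentiable and let ÿ₁ₓ, ẏ₂ₓ be real numbers. Define y(x) = g(x) + x(ẏ₂ₓ − g'(1)) + (x/2)(x − 2)(ÿ₁ₓ − g''(−1)). Then y''(−1) = ÿ₁ₓ and y'(1) = ẏ₂ₓ. -/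
/-! The switching functions are chosen to decouple the two constraints: `x` has derivative `1`
and second derivative `0`, while `x / 2 * (x - 2)` has derivative `x - 1`, vanishing at `x = 1`,
and second derivative `1`. -/

theorem hasDerivAt_half_mul_sub_two (x : ℝ) :
    HasDerivAt (fun x : ℝ => x / 2 * (x - 2)) (x - 1) x :=
  (((hasDerivAt_id' x).div_const 2).mul ((hasDerivAt_id' x).sub_const 2)).congr_deriv (by ring)

theorem deriv_add_mul_add_half_mul_sub_two {g : ℝ → ℝ} (hg : Differentiable ℝ g) (a b : ℝ) :
    deriv (fun x => g x + x * a + x / 2 * (x - 2) * b) = fun x => deriv g x + a + (x - 1) * b :=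
  funext fun x => (((hg x).hasDerivAt.add ((hasDerivAt_id' x).mul_const a)).add
    ((hasDerivAt_half_mul_sub_two x).mul_const b)).deriv.trans (by ring)

theorem deriv_add_const_add_sub_one_mul {f : ℝ → ℝ} {x : ℝ} (hf : DifferentiableAt ℝ f x)
    (a b : ℝ) : deriv (fun x => f x + a + (x - 1) * b) x = deriv f x + b :=
  ((hf.hasDerivAt.add_const a).add (((hasDerivAt_id' x).sub_const 1).mul_const b)).deriv.trans
    (by rw [one_mul])

theorem stmt_12 (g : ℝ → ℝ) (hg : Differentiable ℝ g) (hg' : Differentiable ℝ (deriv g))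
    (yddot₁ₓ ydot₂ₓ : ℝ) (y : ℝ → ℝ)
    (hy : ∀ x, y x = g x + x * (ydot₂ₓ - deriv g 1)
        + x / 2 * (x - 2) * (yddot₁ₓ - deriv (deriv g) (-1))) :
    deriv (deriv y) (-1) = yddot₁ₓ ∧ deriv y 1 = ydot₂ₓ := by
  rw [funext hy, deriv_add_mul_add_half_mul_sub_two hg,
    deriv_add_const_add_sub_one_mul (hg' (-1))]
  constructor <;> ring
end
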